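/- arXiv:1303.0411 — 3 statements merged into one kernel-verified Lean document; each statement's English description precedes it below -/
import Mathlib

section
/- Let F be a finite field with char F ≠ 2, α ∈ F a square with α + 1 not a square, and λ ∈ F with λ² = 4α. Define ℱ = { [[v, w],[w, λw + v]] : v ∈ F, w ∈ F, w ≠ 0 }. Then every matrix in ℱ is invertible, and the difference of any two distinct matrices in ℱ is invertible. -/
lemma key_det_ne_zero (F : Type*) [Field F] (two_ne : (2:F) ≠ 0) (α l : F)
    (hα1 : ¬ ∃ y : F, y ^ 2 = α + 1) (hl : l ^ 2 = 4 * α)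
    (v w : F) (hw : w ≠ 0) : v * (l * w + v) - w * w ≠ 0 := by
  intro h
  apply hα1
  refine ⟨(v + l * w / 2) / w, ?_⟩
  field_simp
  ring_nf
  linear_combination 4 * h + w ^ 2 * hl

theorem family_invertible_and_diff_invertible (F : Type*) [Field F] [Fintype F]
    (hchar : ringChar F ≠ 2) (α : F) (hα : ∃ y : F, y ^ 2 = α)
    (hα1 : ¬ ∃ y : F, y ^ 2 = α + 1) (l : F) (hl : l ^ 2 = 4 * α) :
    (∀ v w : F, w ≠ 0 → IsUnit (!![v, w; w, l * w + v])) ∧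
    (∀ v₁ w₁ v₂ w₂ : F, w₁ ≠ 0 → w₂ ≠ 0 → (v₁, w₁) ≠ (v₂, w₂) →
      IsUnit (!![v₁, w₁; w₁, l * w₁ + v₁] - !![v₂, w₂; w₂, l * w₂ + v₂])) := by
  have two_ne : (2:F) ≠ 0 := Ring.two_ne_zero hchar
  constructor
  · intro v w hw
    rw [Matrix.isUnit_iff_isUnit_det, Matrix.det_fin_two_of, isUnit_iff_ne_zero]
    exact key_det_ne_zero F two_ne α l hα1 hl v w hw
  · intro v₁ w₁ v₂ w₂ hw₁ hw₂ hne
    have hM : !![v₁, w₁; w₁, l * w₁ + v₁] - !![v₂, w₂; w₂, l * w₂ + v₂] =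
        !![v₁ - v₂, w₁ - w₂; w₁ - w₂, l * (w₁ - w₂) + (v₁ - v₂)] := by
      ext i j
      fin_cases i <;> fin_cases j <;> simp [Matrix.sub_apply] <;> ring
    rw [hM, Matrix.isUnit_iff_isUnit_det, Matrix.det_fin_two_of, isUnit_iff_ne_zero]
    by_cases hw : w₁ - w₂ = 0
    · have hv : v₁ - v₂ ≠ 0 := by
        intro hv
        exact hne (Prod.ext (sub_eq_zero.mp hv) (sub_eq_zero.mp hw))
      rw [hw]
      intro h
      have h' : (v₁ - v₂) * (v₁ - v₂) = 0 := by linear_combination h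
      rcases mul_eq_zero.mp h' with h'' | h'' <;> exact hv h''
    · exact key_det_ne_zero F two_ne α l hα1 hl (v₁ - v₂) (w₁ - w₂) hw
end

section
/- Let F be a finite field with char F ≠ 2, α a square in F with α+1 not a square, and λ ∈ F with λ² = 4α. For v₁, v₂ ∈ F and nonzero w₁, w₂ ∈ F, if (v₁, w₁) ≠ (v₂, w₂) then det [[v₁−v₂, w₁−w₂],[w₁−w₂, λ(w₁−w₂)+(v₁−v₂)]] ≠ 0. -/
theorem det_diff_ne_zero (F : Type*) [Field F] [Fintype F]
    (hchar : ringChar F ≠ 2) (α : F) (hα : ∃ y : F, y ^ 2 = α)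
    (hα1 : ¬ ∃ y : F, y ^ 2 = α + 1) (l : F) (hl : l ^ 2 = 4 * α)
    (v₁ v₂ w₁ w₂ : F) (hw₁ : w₁ ≠ 0) (hw₂ : w₂ ≠ 0)
    (hne : (v₁, w₁) ≠ (v₂, w₂)) :
    (!![v₁ - v₂, w₁ - w₂; w₁ - w₂, l * (w₁ - w₂) + (v₁ - v₂)]).det ≠ 0 := by
  have h2 : (2 : F) ≠ 0 := Ring.two_ne_zero hchar
  intro h
  rw [Matrix.det_fin_two_of] at h
  set v := v₁ - v₂ with hv
  set w := w₁ - w₂ with hw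
  by_cases hw0 : w = 0
  · rw [hw0] at h
    have hv0 : v = 0 := by
      have : v * v = 0 := by linear_combination h
      rcases mul_eq_zero.1 this with h' | h' <;> exact h'
    exact hne (Prod.ext (sub_eq_zero.mp hv0) (sub_eq_zero.mp hw0))
  · apply hα1
    refine ⟨(2 * v + l * w) / (2 * w), ?_⟩
    field_simp
    linear_combination (4 : F) * h + w ^ 2 * hl
end

section
/- Let F be a finite field of odd order q. The number of elements α ∈ F such that α is a nonzero square and α + 1 is not a square is at least 1. -/
open Finset

theorem exists_nonzero_square_with_nonsquare_succ (F : Type*) [Field F] [Fintype F]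
    (hodd : Odd (Fintype.card F)) :
    ∃ α : F, α ≠ 0 ∧ (∃ y : F, y ^ 2 = α) ∧ ¬ (∃ y : F, y ^ 2 = α + 1) := by
  classical
  by_contra hc
  push_neg at hc
  set p := ringChar F with hp
  haveI : CharP F p := ringChar.charP F
  have hpprime : p.Prime := CharP.char_is_prime F p
  haveI : Fact p.Prime := ⟨hpprime⟩
  have hpdvd : p ∣ Fintype.card F := by
    obtain ⟨n, -, hn⟩ := FiniteField.card F p
    exact hn ▸ dvd_pow_self p n.ne_zero
  have hp2 : p ≠ 2 := by
    intro h2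
    rw [h2] at hpdvd
    exact (Nat.not_even_iff_odd.mpr hodd) (even_iff_two_dvd.mpr hpdvd)
  -- the set of squares
  set S : Finset F := univ.image (fun y : F => y ^ 2) with hS
  have hmem : ∀ a : F, a ∈ S ↔ ∃ y : F, y ^ 2 = a := by
    intro a; simp [hS]
  -- S is closed under adding 1
  have hsucc : ∀ a : F, a ∈ S → a + 1 ∈ S := by
    intro a ha
    rcases eq_or_ne a 0 with rfl | h0
    · rw [hmem]; exact ⟨1, by ring⟩
    · rw [hmem]; exact hc a h0 ((hmem a).mp ha)
  have hnat : ∀ (n : ℕ) (a : F), a ∈ S → a + (n : F) ∈ S := by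
    intro n
    induction n with
    | zero => simpa using fun a ha => ha
    | succ k ih =>
        intro a ha
        have := hsucc _ (ih a ha)
        push_cast
        rw [← add_assoc]
        push_cast at this
        exact this
  -- closure under adding elements of ZMod p
  set φ : ZMod p →+* F := ZMod.castHom dvd_rfl F with hφ
  have hz : ∀ (c : ZMod p) (a : F), a ∈ S → a + φ c ∈ S := by
    intro c a ha
    have hkey : φ c = ((c.val : ℕ) : F) := by
      rw [← map_natCast φ c.val, ZMod.natCast_rightInverse c]
    rw [hkey]
    exact hnat c.val a ha
  -- action of ZMod p on S
  letI act : MulAction (Multiplicative (ZMod p)) {x : F // x ∈ S} :=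
    { smul := fun g x => ⟨x.1 + φ g.toAdd, hz _ _ x.2⟩
      one_smul := by
        rintro ⟨x, hx⟩
        show (⟨x + φ _, _⟩ : {x : F // x ∈ S}) = _
        simp
      mul_smul := by
        rintro g h ⟨x, hx⟩
        show (⟨x + φ _, _⟩ : {x : F // x ∈ S}) = ⟨(x + φ h.toAdd) + φ g.toAdd, _⟩
        simp only [Subtype.mk.injEq]
        rw [toAdd_mul, map_add]
        ring }
  have hpgroup : IsPGroup p (Multiplicative (ZMod p)) := by
    apply IsPGroup.of_card (n := 1)
    rw [Nat.card_eq_fintype_card, pow_one, Fintype.card_multiplicative]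
    convert ZMod.card p
  have hfixed : IsEmpty (MulAction.fixedPoints (Multiplicative (ZMod p)) {x : F // x ∈ S}) := by
    constructor
    rintro ⟨⟨x, hx⟩, hfix⟩
    have := hfix (Multiplicative.ofAdd (1 : ZMod p))
    have h1 : x + φ 1 = x := congrArg Subtype.val this
    simp only [map_one] at h1
    exact one_ne_zero (add_eq_left.mp h1)
  -- p divides the number of squares
  have hdvdS : p ∣ S.card := by
    have hme := hpgroup.card_modEq_card_fixedPoints {x : F // x ∈ S}
    rw [Nat.card_of_isEmpty (α := MulAction.fixedPoints (Multiplicative (ZMod p)) {x : F // x ∈ S})] at hme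
    have : Nat.card {x : F // x ∈ S} = S.card := by
      rw [Nat.card_eq_fintype_card, Fintype.card_coe]
    rw [this] at hme
    exact (Nat.modEq_zero_iff_dvd).mp hme
  -- counting: card F = 2 * S.card - 1
  have h0S : (0 : F) ∈ S := (hmem 0).mpr ⟨0, by ring⟩
  have hfib0 : (univ.filter fun y : F => y ^ 2 = 0).card = 1 := by
    have he : (univ.filter fun y : F => y ^ 2 = 0) = {0} := by
      ext y; simp [pow_eq_zero_iff]
    rw [he, card_singleton]
  have hfib : ∀ a ∈ S, a ≠ 0 → (univ.filter fun y : F => y ^ 2 = a).card = 2 := by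
    intro a ha h0
    obtain ⟨b, hb⟩ := (hmem a).mp ha
    have hbne0 : b ≠ 0 := fun h => h0 (by rw [← hb, h]; ring)
    have hbne : b ≠ -b := by
      intro h
      apply hbne0
      have h2 : (2 : F) * b = 0 := by linear_combination h
      rcases mul_eq_zero.mp h2 with h2' | h2'
      · exact absurd h2' (Ring.two_ne_zero hp2)
      · exact h2'
    have he : (univ.filter fun y : F => y ^ 2 = a) = {b, -b} := by
      ext y
      simp only [mem_filter, mem_univ, true_and, mem_insert, mem_singleton]
      rw [← hb]
      exact sq_eq_sq_iff_eq_or_eq_neg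
    rw [he, card_insert_of_notMem (by simpa using hbne), card_singleton]
  have hsum : Fintype.card F = ∑ a ∈ S, (univ.filter fun y : F => y ^ 2 = a).card := by
    rw [← card_univ]
    exact card_eq_sum_card_image (fun y : F => y ^ 2) univ
  have hsum2 : ∑ a ∈ S, (univ.filter fun y : F => y ^ 2 = a).card = 2 * S.card - 1 := by
    rw [← Finset.add_sum_erase S _ h0S, hfib0]
    rw [Finset.sum_congr rfl (fun a ha => hfib a (Finset.mem_of_mem_erase ha)
      (Finset.ne_of_mem_erase ha))]
    rw [Finset.sum_const, Finset.card_erase_of_mem h0S, smul_eq_mul]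
    have hpos : 1 ≤ S.card := Finset.card_pos.mpr ⟨0, h0S⟩
    omega
  have hcard : Fintype.card F + 1 = 2 * S.card := by
    rw [hsum, hsum2]
    have hpos : 1 ≤ S.card := Finset.card_pos.mpr ⟨0, h0S⟩
    omega
  have hdvd1 : p ∣ 1 := by
    have h1 : p ∣ Fintype.card F + 1 := hcard ▸ Dvd.dvd.mul_left hdvdS 2
    simpa using Nat.dvd_sub h1 hpdvd
  exact Nat.Prime.one_lt hpprime |>.ne' (Nat.dvd_one.mp hdvd1)
end
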